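/- Let n ≥ 5 and J ⊆ {3,...,n} with |J| = m. Every J-circuit that is undominated with respect to (J, ∅) assigns to the variables (x_j)_{j∈J} exactly the values {v_1,...,v_m}; equivalently, the undominated J-circuits are precisely the assignments of v_1,...,v_m in some order to the x_j, j ∈ J. -/

import Mathlib

/-- The partial assignment `f` on `J` creates no cycle. -/
def NoCycleOn {n : ℕ} (f : Fin n → Fin n) (J : Finset (Fin n)) : Prop :=
  ¬ ∃ j ∈ J, ∃ k, 0 < k ∧ (∀ t < k, f^[t] j ∈ J) ∧ f^[k] j = j

/-- A `J`-circuit: an injective, cycle-free partial assignment on `J`. -/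
def IsJCircuit {n : ℕ} (J : Finset (Fin n)) (f : Fin n → Fin n) : Prop :=
  Set.InjOn f J ∧ NoCycleOn f J

/-- `g` dominates `f` with respect to the partition `(J₊, J₋)`. -/
def Dominates {n : ℕ} (v : Fin n → ℝ) (Jp Jm : Finset (Fin n)) (g f : Fin n → Fin n) : Prop :=
  (∃ j ∈ Jp ∪ Jm, g j ≠ f j) ∧ (∀ j ∈ Jp, v (g j) ≤ v (f j)) ∧ (∀ j ∈ Jm, v (f j) ≤ v (g j))

/-!
Values below `m = |J|` are never indices in `J`, so an injective assignment of such values is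
automatically cycle free. Replacing every value `f j` by its rank in `f(J)` gives such an
assignment lying componentwise below `f`, and strictly below it as soon as some value is `≥ m`;
hence undominated circuits use only values below `m`. Conversely, if `f(J) = {0, …, m-1}`,
an injective `g ≤ f` on `J` also has `g(J) = {0, …, m-1}`, so `∑ g = ∑ f` forces `g = f`
on `J`.
-/

namespace Finset

variable {ι : Type*} {s : Finset ι} {f g : ι → ℕ}

lemma image_eq_range_of_injOn_of_lt_card (hf : Set.InjOn f s) (hlt : ∀ i ∈ s, f i < #s) :
    s.image f = range #s :=
  eq_of_subset_of_card_le (fun _ hx ↦ by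
      obtain ⟨i, hi, rfl⟩ := mem_image.mp hx
      exact mem_range.mpr (hlt i hi))
    (by rw [card_range, card_image_of_injOn hf])

lemma sum_eq_sum_range_of_injOn_of_lt_card (hf : Set.InjOn f s) (hlt : ∀ i ∈ s, f i < #s) :
    ∑ i ∈ s, f i = ∑ k ∈ range #s, k := by
  rw [← image_eq_range_of_injOn_of_lt_card hf hlt, sum_image hf]

lemma eqOn_of_injOn_of_le_of_lt_card (hf : Set.InjOn f s) (hlt : ∀ i ∈ s, f i < #s)
    (hg : Set.InjOn g s) (hle : ∀ i ∈ s, g i ≤ f i) : Set.EqOn g f s := by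
  have hsum : ∑ i ∈ s, g i = ∑ i ∈ s, f i := by
    rw [sum_eq_sum_range_of_injOn_of_lt_card hf hlt,
      sum_eq_sum_range_of_injOn_of_lt_card hg fun i hi ↦ (hle i hi).trans_lt (hlt i hi)]
  exact fun i hi ↦ (sum_eq_sum_iff_of_le hle).mp hsum i hi

lemma exists_injOn_le_lt_card (hf : Set.InjOn f s) :
    ∃ g : ι → ℕ, Set.InjOn g s ∧ (∀ i, g i ≤ f i) ∧ ∀ i ∈ s, g i < #s := by
  set rank : ι → ℕ := fun i ↦ #((s.image f).filter (· < f i))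
  have rank_lt : ∀ a ∈ s, ∀ b, f a < f b → rank a < rank b := fun a ha b hab ↦
    card_lt_card <| ssubset_iff_of_subset (monotone_filter_right _ fun _ _ hx ↦ lt_trans hx hab)
      |>.mpr ⟨f a, mem_filter.mpr ⟨mem_image_of_mem f ha, hab⟩, by simp⟩
  refine ⟨rank, fun a ha b hb hab ↦ ?_, fun i ↦ ?_, fun i hi ↦ ?_⟩
  · rcases lt_trichotomy (f a) (f b) with h | h | h
    · exact absurd hab (rank_lt a ha b h).ne
    · exact hf ha hb h
    · exact absurd hab (rank_lt b hb a h).ne'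
  · calc rank i ≤ #(range (f i)) := card_le_card fun x hx ↦ mem_range.mpr (mem_filter.mp hx).2
      _ = f i := card_range _
  · calc rank i < #(s.image f) :=
          card_lt_card <| filter_ssubset.mpr ⟨f i, mem_image_of_mem f hi, lt_irrefl _⟩
      _ = #s := card_image_of_injOn hf

end Finset

lemma noCycleOn_of_forall_notMem {n : ℕ} {f : Fin n → Fin n} {J : Finset (Fin n)}
    (h : ∀ j ∈ J, f j ∉ J) : NoCycleOn f J := by
  rintro ⟨j, hj, k, hk, hJ, hcyc⟩
  rcases Nat.lt_or_eq_of_le hk with hk | rfl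
  · exact h j hj (hJ 1 hk)
  · rw [Function.iterate_one] at hcyc
    exact h j hj (by rw [hcyc]; exact hj)

lemma isJCircuit_of_injOn_of_lt {n m : ℕ} {J : Finset (Fin n)} {f : Fin n → Fin n}
    (hJm : ∀ j ∈ J, m ≤ (j : ℕ)) (hf : Set.InjOn f J) (hlt : ∀ j ∈ J, (f j : ℕ) < m) :
    IsJCircuit J f :=
  ⟨hf, noCycleOn_of_forall_notMem fun j hj hmem ↦ (hJm _ hmem).not_gt (hlt j hj)⟩

theorem stmt_8 (n : ℕ) (v : Fin n → ℝ) (hv : StrictMono v)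
    (J : Finset (Fin n)) (m : ℕ) (hcard : J.card = m)
    (hJm : ∀ j ∈ J, m ≤ (j : ℕ))
    (f : Fin n → Fin n) :
    (IsJCircuit J f ∧
      ¬ ∃ g : Fin n → Fin n, IsJCircuit J g ∧ Dominates v J ∅ g f) ↔
    (Set.InjOn f J ∧ ∀ j ∈ J, (f j : ℕ) < m) := by
  subst hcard
  constructor
  · rintro ⟨⟨hinj, -⟩, hund⟩
    refine ⟨hinj, fun j₀ hj₀ ↦ not_le.mp fun hj₀m ↦ hund ?_⟩
    obtain ⟨g, hginj, hle, hlt⟩ := J.exists_injOn_le_lt_card (Fin.val_injective.comp_injOn hinj)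
    let G : Fin n → Fin n := fun j ↦ ⟨g j, (hle j).trans_lt (f j).isLt⟩
    refine ⟨G, isJCircuit_of_injOn_of_lt hJm
      (fun a ha b hb hab ↦ hginj ha hb (congrArg Fin.val hab)) hlt, ?_, ?_, by simp⟩
    · refine ⟨j₀, by simpa using hj₀, fun h ↦ ?_⟩
      exact (hlt j₀ hj₀).not_ge (hj₀m.trans_eq (congrArg Fin.val h).symm)
    · exact fun j _ ↦ hv.monotone (Fin.le_iff_val_le_val.mpr (hle j))
  · rintro ⟨hinj, hlt⟩
    refine ⟨isJCircuit_of_injOn_of_lt hJm hinj hlt, ?_⟩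
    rintro ⟨g, ⟨hginj, -⟩, ⟨j₀, hj₀, hne⟩, hdom, -⟩
    rw [Finset.union_empty] at hj₀
    have hEq := Finset.eqOn_of_injOn_of_le_of_lt_card (Fin.val_injective.comp_injOn hinj) hlt
      (Fin.val_injective.comp_injOn hginj) fun j hj ↦ hv.le_iff_le.mp (hdom j hj)
    exact hne (Fin.ext (hEq hj₀))
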